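/- If π is a PX victory with n ≥ 1 steps, then the pattern obtained from π by emptying any one square containing a stone is a PX attack with at most n+1 steps, or a stronger pattern (a victory). -/

import Mathlib

/- # A formal model of Gomoku patterns and restricted games -/

abbrev Square := ℤ × ℤ

inductive Cell
  | px | py | empty
deriving DecidableEq

/-- A pattern: a finite set of board squares together with their contents. -/
structure Pattern where
  dom : Finset Square
  val : Square → Cell

def Pattern.emptySquares (p : Pattern) : Finset Square :=
  p.dom.filter (fun s => p.val s = Cell.empty)

/-- Fill (or empty) a square of the pattern with the given content. -/
def Pattern.fill (p : Pattern) (s : Square) (c : Cell) : Pattern :=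
  ⟨p.dom, fun t => if t = s then c else p.val t⟩

/-- Remove a square from the pattern. -/
def Pattern.erase (p : Pattern) (s : Square) : Pattern :=
  ⟨p.dom.erase s, p.val⟩

/-- A PX pattern contains no PY stones. -/
def Pattern.isPX (p : Pattern) : Prop :=
  ∀ s ∈ p.dom, p.val s ≠ Cell.py

/-- The four alignment directions. -/
def dirs : List Square := [(1, 0), (0, 1), (1, 1), (1, -1)]

def shift (s d : Square) (i : ℕ) : Square :=
  (s.1 + (i : ℤ) * d.1, s.2 + (i : ℤ) * d.2)

/-- A block: five aligned consecutive squares starting at `s` in direction `d`. -/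
def blockSquares (s d : Square) : Finset Square :=
  (Finset.range 5).image (fun i => shift s d i)

/-- A line: nine aligned consecutive squares. -/
def lineSquares (s d : Square) : Finset Square :=
  (Finset.range 9).image (fun i => shift s d i)

def lineCenter (s d : Square) : Square := shift s d 4

/-- Five aligned consecutive stones of colour `c` inside the pattern. -/
def hasFive (p : Pattern) (c : Cell) : Prop :=
  ∃ s d, d ∈ dirs ∧ blockSquares s d ⊆ p.dom ∧ ∀ t ∈ blockSquares s d, p.val t = c

/-- `winsIn b n p`: in the game restricted to `p`, with PX to move iff `b`,
PX (playing optimally) forces a five-in-a-row within `n` further plies,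
against any play of PY. -/
def winsIn : Bool → ℕ → Pattern → Prop
  | _, 0, p => hasFive p Cell.px
  | true, n + 1, p =>
      hasFive p Cell.px ∨ (¬ hasFive p Cell.py ∧
        ∃ s ∈ p.emptySquares, winsIn false n (p.fill s Cell.px))
  | false, n + 1, p =>
      hasFive p Cell.px ∨ (¬ hasFive p Cell.py ∧ p.emptySquares.Nonempty ∧
        ∀ s ∈ p.emptySquares, winsIn true n (p.fill s Cell.py))

/-- PX wins the restricted game moving first. -/
def pxWinsFirst (p : Pattern) : Prop := ∃ n, winsIn true n p

/-- PX wins the restricted game moving second. -/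
def pxWinsSecond (p : Pattern) : Prop := ∃ n, winsIn false n p

/-- A PX victory: a PX pattern where PX wins moving first or second. -/
def isVictory (p : Pattern) : Prop := p.isPX ∧ pxWinsFirst p ∧ pxWinsSecond p

/-- A victory of `n` steps: PX, moving second, wins placing `n` stones
(i.e. within `2*n` plies) and no fewer. -/
def victorySteps (p : Pattern) (n : ℕ) : Prop :=
  isVictory p ∧ winsIn false (2 * n) p ∧ ∀ m < n, ¬ winsIn false (2 * m) p

/-- A trigger of a pattern: an empty square whose filling by PX yields a PX victory. -/
def isTrigger (p : Pattern) (s : Square) : Prop :=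
  s ∈ p.emptySquares ∧ isVictory (p.fill s Cell.px)

/-- A PX attack: a PX pattern, not a victory, with a trigger. -/
def isAttack (p : Pattern) : Prop :=
  p.isPX ∧ ¬ isVictory p ∧ ∃ s, isTrigger p s

/-- An attack of `n` steps: `n` is one plus the steps of the fastest victory
reachable by playing a trigger. -/
def attackSteps (p : Pattern) (n : ℕ) : Prop :=
  isAttack p ∧ 1 ≤ n ∧
  (∃ s, isTrigger p s ∧ victorySteps (p.fill s Cell.px) (n - 1)) ∧
  (∀ s m, isTrigger p s → victorySteps (p.fill s Cell.px) m → n - 1 ≤ m)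

/-- A PX threat: a PX pattern, neither victory nor attack, with an empty square
whose filling by PX yields a PX attack. -/
def isThreat (p : Pattern) : Prop :=
  p.isPX ∧ ¬ isVictory p ∧ ¬ isAttack p ∧
  ∃ s ∈ p.emptySquares, isAttack (p.fill s Cell.px)

/-- A threat of `n` steps: one plus the steps of the fastest reachable attack. -/
def threatSteps (p : Pattern) (n : ℕ) : Prop :=
  isThreat p ∧ 2 ≤ n ∧
  (∃ s ∈ p.emptySquares, attackSteps (p.fill s Cell.px) (n - 1)) ∧
  (∀ s ∈ p.emptySquares, ∀ m, attackSteps (p.fill s Cell.px) m → n - 1 ≤ m)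

/-- `q` is a sub-pattern of `p`. -/
def SubPattern (q p : Pattern) : Prop :=
  q.dom ⊆ p.dom ∧ ∀ s ∈ q.dom, q.val s = p.val s

/-- Two patterns are compatible if they agree on common squares. -/
def Compatible (p q : Pattern) : Prop :=
  ∀ s ∈ p.dom ∩ q.dom, p.val s = q.val s

/-- Union of two (compatible) patterns. -/
def Pattern.union (p q : Pattern) : Pattern :=
  ⟨p.dom ∪ q.dom, fun s => if s ∈ p.dom then p.val s else q.val s⟩

open Classical in
/-- The defence of an attack: the empty squares where PY, moving first in the
restricted game, can play to stop PX from winning. -/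
noncomputable def Defence (p : Pattern) : Finset Square :=
  p.emptySquares.filter (fun s => ¬ pxWinsFirst (p.fill s Cell.py))

/-- A simple five as a relative pattern: exactly one block, all PX stones. -/
def isS5Pattern (q : Pattern) : Prop :=
  ∃ s d, d ∈ dirs ∧ q.dom = blockSquares s d ∧ ∀ t ∈ q.dom, q.val t = Cell.px

/-- A simple four as a relative pattern: one block, four PX stones, one empty. -/
def isS4Pattern (q : Pattern) : Prop :=
  ∃ s d, d ∈ dirs ∧ q.dom = blockSquares s d ∧
    (q.dom.filter (fun t => q.val t = Cell.px)).card = 4 ∧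
    (q.dom.filter (fun t => q.val t = Cell.empty)).card = 1

/-- A simple three as a relative pattern: one block, three PX stones, two empty. -/
def isS3Pattern (q : Pattern) : Prop :=
  ∃ s d, d ∈ dirs ∧ q.dom = blockSquares s d ∧
    (q.dom.filter (fun t => q.val t = Cell.px)).card = 3 ∧
    (q.dom.filter (fun t => q.val t = Cell.empty)).card = 2

/-- A PX block of degree 4 on the board `p`: a block inside `p` with no PY
stones and exactly four PX stones. -/
def isPXBlock4 (p : Pattern) (t d : Square) : Prop :=
  blockSquares t d ⊆ p.dom ∧ (∀ u ∈ blockSquares t d, p.val u ≠ Cell.py) ∧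
  ((blockSquares t d).filter (fun u => p.val u = Cell.px)).card = 4

/-- A simple four for colour `c` on board `p`: a block inside `p` with four
stones of colour `c` and a single empty (trigger) square `g`. -/
def isSimpleFourBlock (p : Pattern) (c : Cell) (t d g : Square) : Prop :=
  d ∈ dirs ∧ blockSquares t d ⊆ p.dom ∧ g ∈ blockSquares t d ∧
  p.val g = Cell.empty ∧ ∀ u ∈ blockSquares t d, u ≠ g → p.val u = c

/-- A simple three for PX on board `p`: a block inside `p` with three PX
stones, two empty squares and no PY stones. -/
def isSimpleThreeBlock (p : Pattern) (t d : Square) : Prop :=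
  d ∈ dirs ∧ blockSquares t d ⊆ p.dom ∧ (∀ u ∈ blockSquares t d, p.val u ≠ Cell.py) ∧
  ((blockSquares t d).filter (fun u => p.val u = Cell.px)).card = 3 ∧
  ((blockSquares t d).filter (fun u => p.val u = Cell.empty)).card = 2

/-- The tracker vector of two blocks `A`, `B`: at each square, the number of
blocks among `A`, `B` in which that square is empty. -/
def tracker (p : Pattern) (A B : Finset Square) (t : Square) : ℕ :=
  (if t ∈ A ∧ p.val t = Cell.empty then 1 else 0) +
  (if t ∈ B ∧ p.val t = Cell.empty then 1 else 0)

/-- The pattern `+XXXX+`: six aligned consecutive squares, four PX stones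
flanked by two empty squares. -/
def d4pat : Pattern :=
  ⟨(Finset.range 6).image (fun i : ℕ => ((i : ℤ), (0 : ℤ))),
   fun s => if s = ((0 : ℤ), (0 : ℤ)) ∨ s = ((5 : ℤ), (0 : ℤ)) then Cell.empty else Cell.px⟩

/-- The pattern `XXXX+`: four aligned consecutive PX stones followed by one
empty square. -/
def s4pat : Pattern :=
  ⟨(Finset.range 5).image (fun i : ℕ => ((i : ℤ), (0 : ℤ))),
   fun s => if s = ((4 : ℤ), (0 : ℤ)) then Cell.empty else Cell.px⟩

namespace Pattern

@[simp]
lemma fill_fill (p : Pattern) (s : Square) (c c' : Cell) :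
    (p.fill s c).fill s c' = p.fill s c' := by
  simp only [fill, mk.injEq, true_and]
  funext t
  split_ifs <;> rfl

@[simp]
lemma fill_val_self (p : Pattern) (s : Square) : p.fill s (p.val s) = p := by
  simp only [fill]
  congr
  funext t
  split_ifs with h <;> simp [h]

lemma fill_fill_of_val_eq {p : Pattern} {s : Square} {c : Cell} (h : p.val s = c) (c' : Cell) :
    (p.fill s c').fill s c = p := by
  rw [fill_fill, ← h, fill_val_self]

lemma isPX_fill {p : Pattern} (hp : p.isPX) (s : Square) {c : Cell} (hc : c ≠ Cell.py) :
    (p.fill s c).isPX := by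
  intro t ht
  by_cases hts : t = s <;> simp [fill, hts, hc, hp t ht]

end Pattern

lemma isTrigger_fill_empty {p : Pattern} (hp : isVictory p) {s : Square} (hs : s ∈ p.dom)
    (hstone : p.val s = Cell.px) : isTrigger (p.fill s Cell.empty) s := by
  refine ⟨Finset.mem_filter.2 ⟨hs, by simp [Pattern.fill]⟩, ?_⟩
  rwa [Pattern.fill_fill_of_val_eq hstone]

lemma exists_attackSteps_le {p : Pattern} (hpx : p.isPX) (hv : ¬ isVictory p) {s : Square}
    (hs : isTrigger p s) {n : ℕ} (hwin : winsIn false (2 * n) (p.fill s Cell.px)) :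
    ∃ m ≤ n + 1, attackSteps p m := by
  classical
  let FastTrigger : ℕ → Prop := fun k =>
    ∃ t, isTrigger p t ∧ winsIn false (2 * k) (p.fill t Cell.px)
  have hn : FastTrigger n := ⟨s, hs, hwin⟩
  have hex : ∃ k, FastTrigger k := ⟨n, hn⟩
  obtain ⟨t, ht, htwin⟩ := Nat.find_spec hex
  have hsteps : victorySteps (p.fill t Cell.px) (Nat.find hex) :=
    ⟨ht.2, htwin, fun j hj hjwin => Nat.find_min hex hj ⟨t, ht, hjwin⟩⟩
  refine ⟨Nat.find hex + 1, Nat.add_le_add_right (Nat.find_le hn) 1, ?_⟩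
  unfold attackSteps isAttack
  refine ⟨⟨hpx, hv, s, hs⟩, by omega, ⟨t, ht, by simpa using hsteps⟩, fun u m hu hum => ?_⟩
  have : Nat.find hex ≤ m := Nat.find_le ⟨u, hu, hum.2.1⟩
  omega

theorem stmt1_general (π : Pattern) (n : ℕ) (hπ : victorySteps π n)
    (s : Square) (hs : s ∈ π.dom) (hstone : π.val s = Cell.px) :
    isVictory (π.fill s Cell.empty) ∨ ∃ m ≤ n + 1, attackSteps (π.fill s Cell.empty) m := by
  by_cases hv : isVictory (π.fill s Cell.empty)
  · exact Or.inl hv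
  have htrig := isTrigger_fill_empty hπ.1 hs hstone
  refine Or.inr (exists_attackSteps_le (Pattern.isPX_fill hπ.1.1 s (by decide)) hv htrig ?_)
  rw [Pattern.fill_fill_of_val_eq hstone]
  exact hπ.2.1

/-- If π is a PX victory with n ≥ 1 steps, then emptying any one square
containing a stone yields a PX attack with at most n+1 steps, or a victory. -/
theorem stmt1 (π : Pattern) (n : ℕ) (hn : 1 ≤ n) (hπ : victorySteps π n)
    (s : Square) (hs : s ∈ π.dom) (hstone : π.val s = Cell.px) :
    isVictory (π.fill s Cell.empty) ∨ ∃ m ≤ n + 1, attackSteps (π.fill s Cell.empty) m :=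
  stmt1_general π n hπ s hs hstone
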